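/- arXiv:1208.6336 — 2 statements merged into one kernel-verified Lean document; each statement's English description precedes it below -/
import Mathlib

section
/- Let r be a positive integer and let p, p', q, q' be positive divisors of r with pq = p'q' dividing 2r. If exactly one of the four integers p, p', q, q' is odd, then G(r,p,q,2) and G(r,p',q',2) are not isomorphic as groups. -/
open SemidirectProduct Multiplicative

/-- The action of `Equiv.Perm (Fin n)` on `(ℤ/rℤ)ⁿ` (written multiplicatively)
by permuting coordinates: `(π • x) i = x (π⁻¹ i)`. -/
def permAct (r n : ℕ) : Equiv.Perm (Fin n) →* MulAut (Multiplicative (Fin n → ZMod r)) where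
  toFun π := AddEquiv.toMultiplicative
    { Equiv.arrowCongr π (Equiv.refl (ZMod r)) with
      map_add' := fun _ _ => rfl }
  map_one' := by ext x; rfl
  map_mul' := by intro π σ; ext x; rfl

/-- The wreath product `G(r,n) = (ℤ/rℤ)ⁿ ⋊ Sₙ`. -/
abbrev GG (r n : ℕ) :=
  SemidirectProduct (Multiplicative (Fin n → ZMod r)) (Equiv.Perm (Fin n)) (permAct r n)

/-- Summing the coordinates, as a homomorphism. -/
def sumHom (r n : ℕ) : Multiplicative (Fin n → ZMod r) →* Multiplicative (ZMod r) where
  toFun x := ofAdd (∑ i, toAdd x i)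
  map_one' := by simp
  map_mul' x y := by
    simp [Finset.sum_add_distrib, ofAdd_add]

/-- `Δ : G(r,n) → ℤ/rℤ`, the sum of the "colors" of an element. -/
def DeltaHom (r n : ℕ) : GG r n →* Multiplicative (ZMod r) :=
  SemidirectProduct.lift (sumHom r n) 1 (by
    intro g
    refine MonoidHom.ext fun x => ?_
    show ofAdd (∑ i, toAdd x (g.symm i)) = _
    rw [Equiv.sum_comp g.symm (toAdd x)]
    simp [sumHom])

/-- The subgroup `p·(ℤ/rℤ)` of `ℤ/rℤ` (written multiplicatively). -/
def pZ (r p : ℕ) : Subgroup (Multiplicative (ZMod r)) :=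
  AddSubgroup.toSubgroup (AddSubgroup.zmultiples (p : ZMod r))

/-- The reflection group `G(r,p,n)` as a subgroup of `G(r,n)`. -/
def Grpn (r p n : ℕ) : Subgroup (GG r n) := (pZ r p).comap (DeltaHom r n)

/-- The scalar element `c = (1,(1,…,1))` of `G(r,n)`. -/
def cEl (r n : ℕ) : GG r n := inl (ofAdd fun _ => (1 : ZMod r))

/-- The cyclic subgroup `C_q = ⟨c^{r/q}⟩` of `G(r,n)`. -/
def CsubQ (r q n : ℕ) : Subgroup (GG r n) := Subgroup.zpowers (cEl r n ^ (r / q))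

/-- `C_q` viewed as a subgroup of `G(r,p,n)`. -/
def CsubIn (r p q n : ℕ) : Subgroup ↥(Grpn r p n) :=
  (CsubQ r q n).comap (Grpn r p n).subtype

lemma cEl_mem_center (r n : ℕ) : cEl r n ∈ Subgroup.center (GG r n) := by
  rw [Subgroup.mem_center_iff]
  intro g
  have h1 : (permAct r n g.right) (ofAdd fun _ => (1 : ZMod r)) =
      ofAdd fun _ => (1 : ZMod r) := rfl
  refine SemidirectProduct.ext ?_ ?_
  · simp [mul_left, cEl, h1, mul_comm]
  · simp [mul_right, cEl]

lemma CsubQ_le_center (r q n : ℕ) : CsubQ r q n ≤ Subgroup.center (GG r n) :=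
  Subgroup.zpowers_le.mpr (pow_mem (cEl_mem_center r n) _)

instance CsubIn_normal (r p q n : ℕ) : (CsubIn r p q n).Normal := by
  constructor
  intro x hx g
  have hx' : (x : GG r n) ∈ CsubQ r q n := hx
  have hc := Subgroup.mem_center_iff.mp (CsubQ_le_center r q n hx') (g : GG r n)
  have key : ((g * x * g⁻¹ : ↥(Grpn r p n)) : GG r n) = (x : GG r n) := by
    push_cast
    rw [hc]
    group
  show ((g * x * g⁻¹ : ↥(Grpn r p n)) : GG r n) ∈ CsubQ r q n
  rw [key]
  exact hx'

/-- The projective reflection group `G(r,p,q,n) = G(r,p,n)/C_q`. -/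
abbrev Gpq (r p q n : ℕ) := ↥(Grpn r p n) ⧸ CsubIn r p q n

/-- The quotient map `G(r,p,n) → G(r,p,q,n)`. -/
def Gmk (r p q n : ℕ) : ↥(Grpn r p n) →* Gpq r p q n := QuotientGroup.mk' (CsubIn r p q n)

open scoped Classical in
/-- The image in `G(r,p,q,n)` of an element of `G(r,n)` (junk value `1` if it does
not lie in `G(r,p,n)`). -/
noncomputable def toGpq (r p q n : ℕ) (g : GG r n) : Gpq r p q n :=
  if h : g ∈ Grpn r p n then Gmk r p q n ⟨g, h⟩ else 1

/-!
When `4 ∣ r` and `p`, `q` are both even, the `(r/2)`-th power of every element of `G(r,p,2)` is a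
scalar `c^u` with `u ∈ (r/2)·ℤ/rℤ`: for a diagonal element because `(r/2)·p = 0`, for an
antidiagonal one because its square is already scalar, with value in `p·ℤ/rℤ`. Such scalars lie
in `C_q`, so `x^(r/2) = 1` on all of `G(r,p,q,2)`. If instead `p` or `q` is odd, the image of the
diagonal element `(1, p - 1)` does not satisfy this. Finally, if exactly one of `p, p', q, q'` is
odd, the even pair on the other side gives `4 ∣ pq = p'q'`, so `4` divides the partner of the odd
one and hence `r`.
-/

section

variable {r n p q p' q' : ℕ}

def scalar (r n : ℕ) (u : ZMod r) : GG r n := inl (ofAdd fun _ => u)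

lemma scalar_zpow (u : ZMod r) (k : ℤ) : scalar r n u ^ k = scalar r n (k * u) := by
  rw [scalar, ← map_zpow, ← ofAdd_zsmul]
  congr
  funext
  simp [zsmul_eq_mul]

lemma scalar_pow (u : ZMod r) (k : ℕ) : scalar r n u ^ k = scalar r n (k * u) := by
  simpa using scalar_zpow (n := n) u k

lemma ZMod.mem_zmultiples_iff_dvd {x y : ZMod r} : y ∈ AddSubgroup.zmultiples x ↔ x ∣ y := by
  rw [AddSubgroup.mem_zmultiples_iff]
  constructor
  · rintro ⟨k, rfl⟩
    exact ⟨k, by rw [zsmul_eq_mul, mul_comm]⟩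
  · rintro ⟨c, rfl⟩
    obtain ⟨k, rfl⟩ := ZMod.intCast_surjective c
    exact ⟨k, by rw [zsmul_eq_mul, mul_comm]⟩

lemma mem_CsubQ_iff {g : GG r n} :
    g ∈ CsubQ r q n ↔ ∃ u : ZMod r, ((r / q : ℕ) : ZMod r) ∣ u ∧ scalar r n u = g := by
  have hc : cEl r n ^ (r / q) = scalar r n (r / q : ℕ) := by
    rw [cEl, ← map_pow, ← ofAdd_nsmul]
    congr
    funext
    simp
  rw [CsubQ, Subgroup.mem_zpowers_iff, hc]
  constructor
  · rintro ⟨k, rfl⟩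
    exact ⟨_, dvd_mul_left _ _, (scalar_zpow _ k).symm⟩
  · rintro ⟨_, ⟨c, rfl⟩, rfl⟩
    obtain ⟨k, rfl⟩ := ZMod.intCast_surjective c
    exact ⟨k, by rw [scalar_zpow, mul_comm]⟩

lemma mem_Grpn_iff {g : GG r n} : g ∈ Grpn r p n ↔ (p : ZMod r) ∣ ∑ i, toAdd g.left i := by
  have hΔ : DeltaHom r n g = ofAdd (∑ i, toAdd g.left i) := by
    change sumHom r n g.left * 1 = _
    rw [mul_one]
    rfl
  rw [Grpn, Subgroup.mem_comap, hΔ, ← ZMod.mem_zmultiples_iff_dvd]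
  rfl

lemma two_mul_natCast_half (hr : Even r) : 2 * ((r / 2 : ℕ) : ZMod r) = 0 := by
  rw [← Nat.cast_ofNat, ← Nat.cast_mul, Nat.mul_div_cancel' hr.two_dvd, ZMod.natCast_self]

lemma natCast_half_mul_eq_zero (hr : Even r) (hp : Even p) : ((r / 2 : ℕ) : ZMod r) * p = 0 := by
  obtain ⟨b, rfl⟩ := hp
  rw [Nat.cast_add, ← two_mul, mul_left_comm, ← mul_assoc, two_mul_natCast_half hr, zero_mul]

lemma natCast_half_ne_zero (hr : 0 < r) (hr2 : Even r) : ((r / 2 : ℕ) : ZMod r) ≠ 0 := by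
  rw [Ne, ZMod.natCast_eq_zero_iff]
  intro h
  have := Nat.le_of_dvd (by obtain ⟨k, rfl⟩ := hr2; omega) h
  omega

lemma inl_pow_half (hr : Even r) (hp : Even p) {a : Fin 2 → ZMod r}
    (ha : (p : ZMod r) ∣ a 0 + a 1) :
    (inl (ofAdd a) : GG r 2) ^ (r / 2) = scalar r 2 ((r / 2 : ℕ) * a 0) := by
  obtain ⟨c, hc⟩ := ha
  rw [← map_pow, ← ofAdd_nsmul, scalar]
  congr
  funext i
  fin_cases i
  · simp [nsmul_eq_mul]
  · simp only [Fin.mk_one, Fin.isValue, Pi.smul_apply, nsmul_eq_mul]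
    linear_combination ((r / 2 : ℕ) : ZMod r) * hc + c * natCast_half_mul_eq_zero hr hp
      - a 0 * two_mul_natCast_half hr

lemma sq_eq_scalar_of_right_eq_swap {g : GG r 2} (h : g.right = Equiv.swap 0 1) :
    g ^ 2 = scalar r 2 (toAdd g.left 0 + toAdd g.left 1) := by
  refine SemidirectProduct.ext ?_ ?_
  · rw [pow_two, mul_left, h]
    funext i
    fin_cases i
    · rfl
    · exact add_comm _ _
  · rw [pow_two, mul_right, h, Equiv.swap_mul_self]
    rfl

lemma exists_pow_half_eq_scalar (h4 : 4 ∣ r) (hp : Even p) {g : GG r 2}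
    (hg : g ∈ Grpn r p 2) : ∃ u, g ^ (r / 2) = scalar r 2 ((r / 2 : ℕ) * u) := by
  have hr : Even r := even_iff_two_dvd.mpr ((by norm_num : 2 ∣ 4).trans h4)
  rw [mem_Grpn_iff, Fin.sum_univ_two] at hg
  have hπ : ∀ π : Equiv.Perm (Fin 2), π = 1 ∨ π = Equiv.swap 0 1 := by decide
  rcases hπ g.right with hπ | hπ
  · have hg_inl : g = inl g.left := SemidirectProduct.ext rfl hπ
    rw [hg_inl]
    exact ⟨_, inl_pow_half hr hp hg⟩
  · obtain ⟨c, hc⟩ := hg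
    obtain ⟨b, rfl⟩ := hp
    have hhalf : r / 2 = r / 4 * 2 := by omega
    refine ⟨b * c, ?_⟩
    rw [hhalf, pow_mul', sq_eq_scalar_of_right_eq_swap hπ, scalar_pow, hc]
    congr 1
    push_cast
    ring

lemma scalar_natCast_half_mul_mem_CsubQ (hq : Even q) (hqr : q ∣ r) (u : ZMod r) :
    scalar r n ((r / 2 : ℕ) * u) ∈ CsubQ r q n :=
  mem_CsubQ_iff.mpr ⟨_, (Nat.cast_dvd_cast (Nat.div_dvd_div_left hqr hq.two_dvd)).mul_right u, rfl⟩

lemma exists_mem_Grpn_pow_half_not_mem_CsubQ (hr : 0 < r) (hr2 : Even r) (hqr : q ∣ r)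
    (hodd : Odd p ∨ Odd q) : ∃ g ∈ Grpn r p 2, g ^ (r / 2) ∉ CsubQ r q 2 := by
  refine ⟨inl (ofAdd ![1, p - 1]), ?_, ?_⟩
  · simp [mem_Grpn_iff]
  rw [mem_CsubQ_iff]
  rintro ⟨u, ⟨c, hc⟩, hu⟩
  rw [← map_pow, ← ofAdd_nsmul, scalar, inl_inj, ofAdd.apply_eq_iff_eq] at hu
  have h0 : u = (r / 2 : ℕ) := by simpa using congrFun hu 0
  have h1 : u = (r / 2 : ℕ) * (p - 1) := by simpa [nsmul_eq_mul] using congrFun hu 1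
  apply natCast_half_ne_zero hr hr2
  rcases hodd with ⟨k, rfl⟩ | ⟨k, rfl⟩
  · push_cast at h1
    linear_combination -h0 + h1 + k * two_mul_natCast_half hr2
  · -- `q` kills every multiple of `r / q`, but fixes `r / 2` because `q` is odd.
    have hqr' : ((2 * k + 1 : ℕ) : ZMod r) * ((r / (2 * k + 1) : ℕ) : ZMod r) = 0 := by
      rw [← Nat.cast_mul, Nat.mul_div_cancel' hqr, ZMod.natCast_self]
    push_cast at hqr'
    linear_combination -(2 * k + 1) * h0 + (2 * k + 1) * hc + c * hqr'
      - k * two_mul_natCast_half hr2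

lemma mk_pow_eq_one_iff (g : Grpn r p n) (k : ℕ) :
    (g : Gpq r p q n) ^ k = 1 ↔ (g : GG r n) ^ k ∈ CsubQ r q n := by
  rw [← QuotientGroup.mk_pow, QuotientGroup.eq_one_iff]
  rfl

lemma Gpq_pow_half_eq_one (h4 : 4 ∣ r) (hp : Even p) (hq : Even q) (hqr : q ∣ r)
    (x : Gpq r p q 2) : x ^ (r / 2) = 1 := by
  induction x using QuotientGroup.induction_on with | H g => ?_
  rw [mk_pow_eq_one_iff]
  obtain ⟨u, hu⟩ := exists_pow_half_eq_scalar h4 hp g.2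
  rw [hu]
  exact scalar_natCast_half_mul_mem_CsubQ hq hqr u

lemma exists_Gpq_pow_half_ne_one (hr : 0 < r) (hr2 : Even r) (hqr : q ∣ r)
    (hodd : Odd p ∨ Odd q) : ∃ x : Gpq r p q 2, x ^ (r / 2) ≠ 1 := by
  obtain ⟨g, hg, hpow⟩ := exists_mem_Grpn_pow_half_not_mem_CsubQ hr hr2 hqr hodd
  exact ⟨(⟨g, hg⟩ : Grpn r p 2), (mk_pow_eq_one_iff _ _).not.mpr hpow⟩

lemma four_dvd_of_odd_of_mul_eq {a b c d : ℕ} (ha : Odd a) (hc : Even c) (hd : Even d)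
    (h : a * b = c * d) : 4 ∣ b :=
  (Nat.Coprime.pow_right 2 ha.coprime_two_right).symm.dvd_of_dvd_mul_left
    (h ▸ mul_dvd_mul hc.two_dvd hd.two_dvd)

lemma isEmpty_Gpq_mulEquiv_of_odd (hr : 0 < r) (hp : p ∣ r) (hq : q ∣ r) (hq' : q' ∣ r)
    (hprod : p * q = p' * q') (hodd : Odd p ∨ Odd q) (hp'_even : Even p')
    (hq'_even : Even q') : IsEmpty (Gpq r p q 2 ≃* Gpq r p' q' 2) := by
  have h4 : 4 ∣ r := by
    rcases hodd with hodd | hodd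
    · exact (four_dvd_of_odd_of_mul_eq hodd hp'_even hq'_even hprod).trans hq
    · exact (four_dvd_of_odd_of_mul_eq hodd hp'_even hq'_even (mul_comm q p ▸ hprod)).trans hp
  have hr2 : Even r := even_iff_two_dvd.mpr ((by norm_num : 2 ∣ 4).trans h4)
  obtain ⟨x, hx⟩ := exists_Gpq_pow_half_ne_one hr hr2 hq hodd
  refine ⟨fun e => hx (e.injective ?_)⟩
  rw [map_pow, map_one, Gpq_pow_half_eq_one h4 hp'_even hq'_even hq']

end

theorem Gpq_rank_two_not_iso_of_exactly_one_odd_general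
    (r p p' q q' : ℕ) (hr : 0 < r)
    (hp : p ∣ r) (hp' : p' ∣ r) (hq : q ∣ r) (hq' : q' ∣ r)
    (hprod : p * q = p' * q')
    (hone : (Odd p ∧ Even p' ∧ Even q ∧ Even q') ∨
            (Even p ∧ Odd p' ∧ Even q ∧ Even q') ∨
            (Even p ∧ Even p' ∧ Odd q ∧ Even q') ∨
            (Even p ∧ Even p' ∧ Even q ∧ Odd q')) :
    IsEmpty (Gpq r p q 2 ≃* Gpq r p' q' 2) := by
  rcases hone with ⟨hodd, hp'e, -, hq'e⟩ | ⟨hpe, hodd, hqe, -⟩ | ⟨-, hp'e, hodd, hq'e⟩ |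
      ⟨hpe, -, hqe, hodd⟩
  · exact isEmpty_Gpq_mulEquiv_of_odd hr hp hq hq' hprod (.inl hodd) hp'e hq'e
  · exact ⟨fun e =>
      (isEmpty_Gpq_mulEquiv_of_odd hr hp' hq' hq hprod.symm (.inl hodd) hpe hqe).false e.symm⟩
  · exact isEmpty_Gpq_mulEquiv_of_odd hr hp hq hq' hprod (.inr hodd) hp'e hq'e
  · exact ⟨fun e =>
      (isEmpty_Gpq_mulEquiv_of_odd hr hp' hq' hq hprod.symm (.inr hodd) hpe hqe).false e.symm⟩

/-- If exactly one of `p, p', q, q'` is odd then `G(r,p,q,2)` and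
`G(r,p',q',2)` are not isomorphic. -/
theorem Gpq_rank_two_not_iso_of_exactly_one_odd
    (r p p' q q' : ℕ) (hr : 0 < r)
    (hp : p ∣ r) (hp' : p' ∣ r) (hq : q ∣ r) (hq' : q' ∣ r)
    (hprod : p * q = p' * q') (hdvd : p * q ∣ 2 * r)
    (hone : (Odd p ∧ Even p' ∧ Even q ∧ Even q') ∨
            (Even p ∧ Odd p' ∧ Even q ∧ Even q') ∨
            (Even p ∧ Even p' ∧ Odd q ∧ Even q') ∨
            (Even p ∧ Even p' ∧ Even q ∧ Odd q')) :
    IsEmpty (Gpq r p q 2 ≃* Gpq r p' q' 2) :=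
  Gpq_rank_two_not_iso_of_exactly_one_odd_general r p p' q q' hr hp hp' hq hq' hprod hone
end

section
/- Let r, p, q be positive integers with p and q dividing r and pq dividing 4r. Assume that q is even, and that if r/p is odd then r/q is even and 4r/(pq) is an odd integer. Then there exists a unique automorphism φ of G(r,p,q,4) such that φ(x) = x for all x ∈ N(r,p,q,4) and, for each i ∈ {1,2,3}: φ(s_i) = t_{i+2}·s_i if r/p is even, and φ(s_i) = t_{i+2}·s_i·c^{r/(2q)} if r/p is odd, where the indices of t are taken modulo 4 (so t₅ = t₁). -/
open SemidirectProduct Multiplicative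

/-- The projection `G(r,p,q,n) → Sₙ`, `g ↦ |g|`. -/
def projPerm (r p q n : ℕ) : Gpq r p q n →* Equiv.Perm (Fin n) :=
  QuotientGroup.lift (CsubIn r p q n)
    (SemidirectProduct.rightHom.comp (Grpn r p n).subtype) (by
      intro x hx
      obtain ⟨k, hk⟩ := hx
      show SemidirectProduct.rightHom ((Grpn r p n).subtype x) = 1
      rw [← hk]
      simp [cEl, ← map_pow, ← map_zpow])

/-- The diagonal subgroup `N(r,p,q,n) = {g ∈ G(r,p,q,n) : |g| = 1}`. -/
def Nsub (r p q n : ℕ) : Subgroup (Gpq r p q n) := (projPerm r p q n).ker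

/-- The simple reflection `(a,b)` (a transposition of `Sₙ`) viewed in `G(r,n)`. -/
def swEl (r n : ℕ) (a b : Fin n) : GG r n := SemidirectProduct.inr (Equiv.swap a b)

/-- The element `t_a = (1, (r/2)·e_a)` of `G(r,n)`. -/
def tEl (r n : ℕ) (a : Fin n) : GG r n :=
  SemidirectProduct.inl (ofAdd (Pi.single a ((r / 2 : ℕ) : ZMod r)))

/-!
The automorphism is a twist `g ↦ u(|g|)·g` by a cochain `u : S₄ → (ℤ/r)⁴`. This is an
endomorphism of `G(r,4)/C_q` as soon as `u` is a crossed homomorphism modulo constant vectors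
lying in `C_q`; it is an involution when `2u` takes such values, and it preserves the image of
`G(r,p,4)` when the coordinate sums of `u` lie in `p·ℤ/r`. The cochain is a crossed
homomorphism `S₄ → 𝔽₂⁴/⟨(1,1,1,1)⟩` with `s_i ↦ e_{i+2}`, pushed into `(ℤ/r)⁴` by
`1 ↦ r/2` (as `q` is even, `c^{r/2} ∈ C_q`), plus, when `r/p` is odd, the scalar `r/(2q)` on
the permutations of odd coordinate sum, which repairs the coordinate-sum condition. Uniqueness
holds because `N(r,p,q,4)` and the `s_i` generate `G(r,p,q,4)`.
-/

section InducedEnd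

variable {G H : Type*} [Group G] [Group H] {ι : G →* H}

noncomputable def MonoidHom.inducedEnd (hι : Function.Injective ι) (f : H →* H)
    (hf : ∀ x, f (ι x) ∈ ι.range) : G →* G :=
  (MonoidHom.ofInjective hι).symm.toMonoidHom.comp ((f.comp ι).codRestrict ι.range hf)

theorem MonoidHom.apply_inducedEnd (hι : Function.Injective ι) (f : H →* H)
    (hf : ∀ x, f (ι x) ∈ ι.range) (x : G) : ι (MonoidHom.inducedEnd hι f hf x) = f (ι x) := by
  simp [MonoidHom.inducedEnd]

theorem MonoidHom.inducedEnd_involutive (hι : Function.Injective ι) {f : H →* H}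
    (hf : ∀ x, f (ι x) ∈ ι.range) (hinv : Function.Involutive f) :
    Function.Involutive (MonoidHom.inducedEnd hι f hf) := fun x =>
  hι <| by rw [MonoidHom.apply_inducedEnd, MonoidHom.apply_inducedEnd, hinv]

end InducedEnd

def MulAut.ofInvolutive {G : Type*} [Group G] (f : G →* G) (hf : Function.Involutive f) :
    MulAut G :=
  MulEquiv.mk (Function.Involutive.toPerm f hf) f.map_mul

section Cocycle

variable {α M M' : Type*} [AddCommGroup M] [AddCommGroup M']

/-- `u` is a crossed homomorphism `Perm α → (α → M)` modulo the constant functions with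
values in `Z`; `Perm α` acts on `α → M` by `(π • v) j = v (π⁻¹ j)`. -/
def IsCocycleMod (Z : AddSubgroup M) (u : Equiv.Perm α → α → M) : Prop :=
  ∀ π σ, ∃ a ∈ Z, u π + (fun j => u σ (π⁻¹ j)) = u (π * σ) + fun _ => a

namespace IsCocycleMod

variable {Z : AddSubgroup M} {u v : Equiv.Perm α → α → M}

theorem exists_eq_const_one (hu : IsCocycleMod Z u) : ∃ a ∈ Z, u 1 = fun _ => a := by
  obtain ⟨a, ha, h⟩ := hu 1 1
  exact ⟨a, ha, by simpa using h⟩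

theorem add (hu : IsCocycleMod Z u) (hv : IsCocycleMod Z v) : IsCocycleMod Z (u + v) := by
  intro π σ
  obtain ⟨a, ha, hπσ⟩ := hu π σ
  obtain ⟨b, hb, h'πσ⟩ := hv π σ
  refine ⟨a + b, Z.add_mem ha hb, funext fun j => ?_⟩
  have h₁ : u π j + u σ (π⁻¹ j) = u (π * σ) j + a := congrFun hπσ j
  have h₂ : v π j + v σ (π⁻¹ j) = v (π * σ) j + b := congrFun h'πσ j
  simp only [Pi.add_apply]
  rw [add_add_add_comm, h₁, h₂]
  abel

theorem map (f : M →+ M') {Z' : AddSubgroup M'} (hf : ∀ a ∈ Z, f a ∈ Z')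
    (hu : IsCocycleMod Z u) : IsCocycleMod Z' fun π j => f (u π j) := by
  intro π σ
  obtain ⟨a, ha, h⟩ := hu π σ
  refine ⟨f a, hf a ha, funext fun j => ?_⟩
  simpa using congrArg f (congrFun h j)

end IsCocycleMod

theorem isCocycleMod_const {Z : AddSubgroup M} {s : Equiv.Perm α → M}
    (hs : ∀ π σ, s π + s σ - s (π * σ) ∈ Z) : IsCocycleMod Z fun π (_ : α) => s π :=
  fun π σ => ⟨_, hs π σ, funext fun _ => by simp⟩

end Cocycle

theorem ZMod.val_nsmul_add_sub_mem {n : ℕ} [NeZero n] {M : Type*} [AddCommGroup M]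
    {Z : AddSubgroup M} {x : M} (hx : n • x ∈ Z) (a b : ZMod n) :
    a.val • x + b.val • x - (a + b).val • x ∈ Z := by
  have h : a.val + b.val = (a + b).val + (a.val + b.val) / n * n := by
    rw [ZMod.val_add, Nat.mod_add_div']
  rw [← add_nsmul, h, add_nsmul, add_sub_cancel_left, mul_nsmul']
  exact Z.nsmul_mem hx _

theorem ZMod.eq_zero_or_eq_one (a : ZMod 2) : a = 0 ∨ a = 1 := by
  revert a
  decide

theorem natCast_mem_zmultiples_natCast {R : Type*} [CommRing R] {m x : ℕ} (h : m ∣ x) :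
    (x : R) ∈ AddSubgroup.zmultiples (m : R) := by
  obtain ⟨k, rfl⟩ := h
  exact AddSubgroup.mem_zmultiples_iff.mpr ⟨k, by simp [mul_comm]⟩

namespace Nat

variable {n r p q : ℕ}

theorem dvd_div_two_of_even_div (hp : p ∣ r) (h : Even (r / p)) : p ∣ r / 2 := by
  obtain ⟨k, hk⟩ := h
  have hr : r = 2 * (p * k) := by rw [← Nat.mul_div_cancel' hp, hk]; ring
  exact ⟨k, by omega⟩

theorem div_dvd_div_two (hq : q ∣ r) (hqe : Even q) : r / q ∣ r / 2 := by
  rcases Nat.eq_zero_or_pos q with rfl | hq0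
  · simp [Nat.eq_zero_of_zero_dvd hq]
  refine ⟨q / 2, ?_⟩
  rw [Nat.div_mul_div_comm hq hqe.two_dvd, mul_comm r q, Nat.mul_div_mul_left r 2 hq0]

theorem two_mul_div_two_mul (h : Even (r / q)) : 2 * (r / (2 * q)) = r / q := by
  rw [mul_comm 2 q, ← Nat.div_div_eq_div_mul, Nat.two_mul_div_two_of_even h]

theorem dvd_mul_div_of_mul_dvd (hq : q ∣ r) (hdvd : p * q ∣ n * r) : p ∣ n * (r / q) := by
  rw [← Nat.mul_div_assoc _ hq]
  exact Nat.dvd_div_of_mul_dvd (mul_comm p q ▸ hdvd)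

theorem eight_dvd_add_four {o m q : ℕ} (ho : Odd o) (hm : Odd m) (h : 4 * o = q * m) :
    8 ∣ q + 4 := by
  have hcop : Nat.Coprime 4 m := by
    simpa using Nat.Coprime.pow_left 2 (Nat.coprime_two_left.mpr hm)
  obtain ⟨s, rfl⟩ : 4 ∣ q := hcop.dvd_of_dvd_mul_right ⟨o, h.symm⟩
  have hos : o = s * m := by linarith
  obtain ⟨t, rfl⟩ := (Nat.odd_mul.mp (hos ▸ ho)).1
  exact ⟨t + 1, by ring⟩

/-- In the case `r/p` odd, the conditions force `q ≡ 4 (mod 8)`, which is what makes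
`r/2 + 4·(r/(2q)) = (r/(2q))·(q + 4)` divisible by `p`. -/
theorem dvd_div_two_add_four_mul (hp : p ∣ r) (hq : q ∣ r) (hdvd : p * q ∣ 4 * r)
    (hpo : Odd (r / p)) (hrq : Even (r / q)) (hm : Odd (4 * r / (p * q))) :
    p ∣ r / 2 + 4 * (r / (2 * q)) := by
  have hr0 : r ≠ 0 := by rintro rfl; simp at hpo
  have hp0 : 0 < p := Nat.pos_of_dvd_of_pos hp (Nat.pos_of_ne_zero hr0)
  have hq0 : 0 < q := Nat.pos_of_dvd_of_pos hq (Nat.pos_of_ne_zero hr0)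
  set a := r / (2 * q)
  set m := 4 * r / (p * q)
  have hr₁ : r = p * (r / p) := (Nat.mul_div_cancel' hp).symm
  have hr₂ : r = 2 * (q * a) := by
    rw [mul_left_comm, two_mul_div_two_mul hrq, Nat.mul_div_cancel' hq]
  have hr₃ : 4 * r = p * q * m := (Nat.mul_div_cancel' hdvd).symm
  have h4o : 4 * (r / p) = q * m :=
    Nat.eq_of_mul_eq_mul_left hp0 (by linarith)
  have h8a : 8 * a = p * m :=
    Nat.eq_of_mul_eq_mul_left hq0 (by linarith)
  obtain ⟨w, hw⟩ := eight_dvd_add_four hpo hm h4o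
  refine ⟨m * w, ?_⟩
  calc r / 2 + 4 * a = (q + 4) * a := by
        rw [add_mul, ← Nat.mul_div_cancel_left (q * a) two_pos, ← hr₂]
    _ = w * (8 * a) := by rw [hw]; ring
    _ = p * (m * w) := by rw [h8a]; ring

end Nat

section Wreath

variable {r p q n : ℕ}

theorem permAct_ofAdd (π : Equiv.Perm (Fin n)) (v : Fin n → ZMod r) :
    permAct r n π (ofAdd v) = ofAdd fun j => v (π⁻¹ j) := rfl

theorem GG.mul_inl (g : GG r n) (x : Multiplicative (Fin n → ZMod r)) :
    g * inl x = inl (permAct r n g.right x) * g := by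
  refine SemidirectProduct.ext ?_ ?_
  · simp [mul_comm]
  · simp

theorem cEl_pow (m : ℕ) : cEl r n ^ m = inl (ofAdd fun _ => (m : ZMod r)) := by
  rw [cEl, ← map_pow, ← ofAdd_nsmul]
  congr
  funext
  simp

theorem inl_const_mem_CsubQ {a : ZMod r}
    (ha : a ∈ AddSubgroup.zmultiples ((r / q : ℕ) : ZMod r)) :
    inl (ofAdd fun _ => a) ∈ CsubQ r q n := by
  obtain ⟨k, rfl⟩ := ha
  refine ⟨k, ?_⟩
  show (cEl r n ^ (r / q)) ^ k = _
  rw [cEl_pow, ← map_zpow, ← ofAdd_zsmul]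
  rfl

theorem DeltaHom_inl (v : Fin n → ZMod r) : DeltaHom r n (inl (ofAdd v)) = ofAdd (∑ j, v j) := by
  rw [DeltaHom, SemidirectProduct.lift_inl]
  rfl

theorem inl_mem_Grpn {v : Fin n → ZMod r} (hv : ∑ j, v j ∈ AddSubgroup.zmultiples (p : ZMod r)) :
    inl (ofAdd v) ∈ Grpn r p n := by
  show DeltaHom r n _ ∈ pZ r p
  rw [DeltaHom_inl]
  exact hv

theorem inr_mem_Grpn (π : Equiv.Perm (Fin n)) : inr π ∈ Grpn r p n := by
  show DeltaHom r n _ ∈ pZ r p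
  rw [DeltaHom, SemidirectProduct.lift_inr]
  exact one_mem _

theorem CsubQ_le_Grpn (hq : q ∣ r) (hdvd : p * q ∣ n * r) : CsubQ r q n ≤ Grpn r p n := by
  rw [CsubQ, Subgroup.zpowers_le, cEl_pow]
  apply inl_mem_Grpn
  simpa using natCast_mem_zmultiples_natCast (R := ZMod r) (Nat.dvd_mul_div_of_mul_dvd hq hdvd)

instance CsubQ_normal : (CsubQ r q n).Normal :=
  ⟨fun x hx g => by rw [Subgroup.mem_center_iff.mp (CsubQ_le_center r q n hx) g,
    mul_inv_cancel_right]; exact hx⟩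

/-- `G(r,n)/C_q`, in which `G(r,p,q,n)` embeds as the image of `G(r,p,n)`. -/
abbrev GGq (r q n : ℕ) := GG r n ⧸ CsubQ r q n

theorem mk_inl_const {a : ZMod r} (ha : a ∈ AddSubgroup.zmultiples ((r / q : ℕ) : ZMod r)) :
    ((inl (ofAdd fun _ => a) : GG r n) : GGq r q n) = 1 :=
  (QuotientGroup.eq_one_iff _).mpr (inl_const_mem_CsubQ ha)

theorem mk_inl_add_const {a : ZMod r} (ha : a ∈ AddSubgroup.zmultiples ((r / q : ℕ) : ZMod r))
    (v : Fin n → ZMod r) (g : GG r n) :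
    ((inl (ofAdd (v + fun _ => a)) * g : GG r n) : GGq r q n) =
      ((inl (ofAdd v) * g : GG r n) : GGq r q n) := by
  rw [ofAdd_add, map_mul, QuotientGroup.mk_mul, QuotientGroup.mk_mul, QuotientGroup.mk_mul,
    mk_inl_const ha, mul_one]

end Wreath

section Twist

variable {r p q n : ℕ} (u : Equiv.Perm (Fin n) → Fin n → ZMod r)
  (hu : IsCocycleMod (AddSubgroup.zmultiples ((r / q : ℕ) : ZMod r)) u)

def twistHom : GG r n →* GGq r q n where
  toFun g := ((inl (ofAdd (u g.right)) * g : GG r n) : GGq r q n)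
  map_one' := by
    obtain ⟨a, ha, hu1⟩ := hu.exists_eq_const_one
    rw [SemidirectProduct.one_right, hu1, mul_one, mk_inl_const ha]
  map_mul' g h := by
    obtain ⟨a, ha, hgh⟩ := hu g.right h.right
    have key : inl (ofAdd (u g.right)) * g * (inl (ofAdd (u h.right)) * h) =
        inl (ofAdd (u g.right + fun j => u h.right (g.right⁻¹ j))) * (g * h) := by
      rw [← mul_assoc, mul_assoc _ g, GG.mul_inl, permAct_ofAdd, ← mul_assoc, ← map_mul,
        ← ofAdd_add, mul_assoc]
    rw [← QuotientGroup.mk_mul, key, hgh, mk_inl_add_const ha, SemidirectProduct.mul_right]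

theorem twistHom_inl (x : Multiplicative (Fin n → ZMod r)) :
    twistHom u hu (inl x) = ↑(inl x : GG r n) := by
  obtain ⟨a, ha, hu1⟩ := hu.exists_eq_const_one
  show ((inl (ofAdd (u (inl x : GG r n).right)) * inl x : GG r n) : GGq r q n) = _
  rw [right_inl, hu1, QuotientGroup.mk_mul, mk_inl_const ha, one_mul]

def twistQ : GGq r q n →* GGq r q n :=
  QuotientGroup.lift (CsubQ r q n) (twistHom u hu) <| by
    refine Subgroup.zpowers_le.mpr ?_
    rw [MonoidHom.mem_ker, cEl_pow, twistHom_inl, ← cEl_pow]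
    exact (QuotientGroup.eq_one_iff _).mpr (Subgroup.mem_zpowers _)

theorem twistQ_mk (g : GG r n) :
    twistQ u hu (g : GGq r q n) = ((inl (ofAdd (u g.right)) * g : GG r n) : GGq r q n) :=
  rfl

theorem twistQ_involutive
    (hu2 : ∀ π, ∃ a ∈ AddSubgroup.zmultiples ((r / q : ℕ) : ZMod r), u π + u π = fun _ => a) :
    Function.Involutive (twistQ u hu) := by
  intro x
  obtain ⟨g, rfl⟩ := QuotientGroup.mk_surjective x
  obtain ⟨a, ha, h⟩ := hu2 g.right
  rw [twistQ_mk, twistQ_mk, SemidirectProduct.mul_right, right_inl, one_mul, ← mul_assoc,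
    ← map_mul, ← ofAdd_add, h, QuotientGroup.mk_mul, mk_inl_const ha, one_mul]

theorem twist_mem_Grpn (hΔ : ∀ π, ∑ j, u π j ∈ AddSubgroup.zmultiples (p : ZMod r))
    {g : GG r n} (hg : g ∈ Grpn r p n) : inl (ofAdd (u g.right)) * g ∈ Grpn r p n :=
  mul_mem (inl_mem_Grpn (hΔ _)) hg

end Twist

section Embedding

variable {r p q n : ℕ}

def gpqToGGq (r p q n : ℕ) : Gpq r p q n →* GGq r q n :=
  QuotientGroup.map _ _ (Grpn r p n).subtype fun _ hx => hx

theorem gpqToGGq_injective : Function.Injective (gpqToGGq r p q n) := by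
  refine (injective_iff_map_eq_one _).mpr fun x hx => ?_
  obtain ⟨g, rfl⟩ := QuotientGroup.mk_surjective x
  exact (QuotientGroup.eq_one_iff g).mpr ((QuotientGroup.eq_one_iff (g : GG r n)).mp hx)

theorem toGpq_of_mem {g : GG r n} (hg : g ∈ Grpn r p n) :
    toGpq r p q n g = Gmk r p q n ⟨g, hg⟩ :=
  dif_pos hg

theorem gpqToGGq_toGpq {g : GG r n} (hg : g ∈ Grpn r p n) :
    gpqToGGq r p q n (toGpq r p q n g) = (g : GGq r q n) := by
  rw [toGpq_of_mem hg]
  rfl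

end Embedding

section TwistAut

variable {r p q n : ℕ} (u : Equiv.Perm (Fin n) → Fin n → ZMod r)
  (hu : IsCocycleMod (AddSubgroup.zmultiples ((r / q : ℕ) : ZMod r)) u)
  (hu2 : ∀ π, ∃ a ∈ AddSubgroup.zmultiples ((r / q : ℕ) : ZMod r), u π + u π = fun _ => a)
  (hΔ : ∀ π, ∑ j, u π j ∈ AddSubgroup.zmultiples (p : ZMod r))

include hΔ in
theorem twistQ_gpqToGGq_mem_range (x : Gpq r p q n) :
    twistQ u hu (gpqToGGq r p q n x) ∈ (gpqToGGq r p q n).range := by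
  obtain ⟨g, rfl⟩ := QuotientGroup.mk_surjective x
  exact ⟨Gmk r p q n ⟨_, twist_mem_Grpn u hΔ g.2⟩, rfl⟩

noncomputable def twistAut : MulAut (Gpq r p q n) :=
  MulAut.ofInvolutive
    (MonoidHom.inducedEnd (gpqToGGq_injective (r := r) (p := p) (q := q) (n := n)) (twistQ u hu)
      (twistQ_gpqToGGq_mem_range u hu hΔ))
    (MonoidHom.inducedEnd_involutive _ _ (twistQ_involutive u hu hu2))

theorem gpqToGGq_twistAut (x : Gpq r p q n) :
    gpqToGGq r p q n (twistAut u hu hu2 hΔ x) = twistQ u hu (gpqToGGq r p q n x) :=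
  MonoidHom.apply_inducedEnd gpqToGGq_injective _ _ x

theorem twistAut_apply_of_mem_Nsub {x : Gpq r p q n} (hx : x ∈ Nsub r p q n) :
    twistAut u hu hu2 hΔ x = x := by
  apply gpqToGGq_injective
  rw [gpqToGGq_twistAut]
  obtain ⟨g, rfl⟩ := QuotientGroup.mk_surjective x
  have h1 : (g : GG r n).right = 1 := hx
  obtain ⟨a, ha, hu1⟩ := hu.exists_eq_const_one
  show twistQ u hu (g : GG r n) = (g : GG r n)
  rw [twistQ_mk, h1, hu1, QuotientGroup.mk_mul, mk_inl_const ha, one_mul]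

theorem twistAut_toGpq (hq : q ∣ r) (hdvd : p * q ∣ n * r) {g g' : GG r n}
    (hg : g ∈ Grpn r p n)
    (h : ((inl (ofAdd (u g.right)) * g : GG r n) : GGq r q n) = g') :
    twistAut u hu hu2 hΔ (toGpq r p q n g) = toGpq r p q n g' := by
  have hg' : g' ∈ Grpn r p n := by
    simpa only [mul_inv_cancel_left] using
      mul_mem (twist_mem_Grpn u hΔ hg) (CsubQ_le_Grpn hq hdvd (QuotientGroup.eq.mp h))
  apply gpqToGGq_injective
  rw [gpqToGGq_twistAut, gpqToGGq_toGpq hg, gpqToGGq_toGpq hg', twistQ_mk, h]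

end TwistAut

section Generation

variable {r p q n : ℕ}

def permToGpq (r p q n : ℕ) : Equiv.Perm (Fin n) →* Gpq r p q n :=
  (Gmk r p q n).comp ((SemidirectProduct.inr).codRestrict _ inr_mem_Grpn)

theorem toGpq_inr (π : Equiv.Perm (Fin n)) : toGpq r p q n (inr π) = permToGpq r p q n π :=
  toGpq_of_mem _

theorem Gpq_hom_ext {H : Type*} [Group H] {f₁ f₂ : Gpq r p q (n + 1) →* H}
    (hN : ∀ x ∈ Nsub r p q (n + 1), f₁ x = f₂ x)
    (hs : ∀ i : Fin n, f₁ (toGpq r p q (n + 1) (swEl r (n + 1) i.castSucc i.succ)) =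
      f₂ (toGpq r p q (n + 1) (swEl r (n + 1) i.castSucc i.succ))) :
    f₁ = f₂ := by
  have hperm : f₁.comp (permToGpq r p q (n + 1)) = f₂.comp (permToGpq r p q (n + 1)) := by
    refine MonoidHom.eq_of_eqOn_denseM (Equiv.Perm.mclosure_swap_castSucc_succ n) ?_
    rintro _ ⟨i, rfl⟩
    have h := hs i
    rwa [swEl, toGpq_inr] at h
  refine MonoidHom.ext fun x => ?_
  obtain ⟨⟨g, hg⟩, rfl⟩ := QuotientGroup.mk_surjective x
  have hl : inl g.left ∈ Grpn r p (n + 1) := by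
    have e : g * (inr g.right)⁻¹ = inl g.left := by
      rw [mul_inv_eq_iff_eq_mul, inl_left_mul_inr_right]
    exact e ▸ mul_mem hg (inv_mem (inr_mem_Grpn g.right))
  have hx : ((⟨g, hg⟩ : Grpn r p (n + 1)) : Gpq r p q (n + 1)) =
      Gmk r p q (n + 1) ⟨inl g.left, hl⟩ * permToGpq r p q (n + 1) g.right := by
    rw [permToGpq, MonoidHom.comp_apply, ← map_mul]
    congr 1
    exact Subtype.ext (inl_left_mul_inr_right g).symm
  have hN' : Gmk r p q (n + 1) ⟨inl g.left, hl⟩ ∈ Nsub r p q (n + 1) :=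
    right_inl (φ := permAct r (n + 1)) g.left
  rw [hx, map_mul, map_mul, hN _ hN', ← MonoidHom.comp_apply f₁, hperm, MonoidHom.comp_apply]

end Generation

section Exceptional

/-- Representatives, vanishing at `0`, of a crossed homomorphism `S₄ → 𝔽₂⁴/⟨(1,1,1,1)⟩`
with `s_i ↦ e_{i+2}` (indices mod 4), tabulated by `(π 0, π 1, π 2)`. It does not lift to
`𝔽₂⁴`: crossed homomorphisms `S₄ → 𝔽₂⁴` take values of even coordinate sum, whereas
`e_{i+2} + ⟨(1,1,1,1)⟩` consists of vectors of odd sum. Hence cocycles are taken modulo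
constant vectors throughout. -/
def cocycleTable (π : Equiv.Perm (Fin 4)) : Fin 4 → ZMod 2 :=
  match (π 0 : ℕ), (π 1 : ℕ), (π 2 : ℕ) with
  | 0, 1, 2 => ![0, 0, 0, 0]
  | 0, 1, 3 => ![0, 1, 1, 1]
  | 0, 2, 1 => ![0, 0, 0, 1]
  | 0, 2, 3 => ![0, 1, 1, 0]
  | 0, 3, 1 => ![0, 1, 0, 1]
  | 0, 3, 2 => ![0, 0, 1, 0]
  | 1, 0, 2 => ![0, 0, 1, 0]
  | 1, 0, 3 => ![0, 1, 1, 0]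
  | 1, 2, 0 => ![0, 0, 1, 1]
  | 1, 2, 3 => ![0, 1, 1, 1]
  | 1, 3, 0 => ![0, 1, 0, 0]
  | 1, 3, 2 => ![0, 0, 0, 0]
  | 2, 0, 1 => ![0, 1, 0, 1]
  | 2, 0, 3 => ![0, 1, 1, 1]
  | 2, 1, 0 => ![0, 1, 0, 0]
  | 2, 1, 3 => ![0, 1, 1, 0]
  | 2, 3, 0 => ![0, 0, 1, 1]
  | 2, 3, 1 => ![0, 0, 0, 1]
  | 3, 0, 1 => ![0, 0, 0, 1]
  | 3, 0, 2 => ![0, 0, 0, 0]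
  | 3, 1, 0 => ![0, 0, 1, 1]
  | 3, 1, 2 => ![0, 0, 1, 0]
  | 3, 2, 0 => ![0, 1, 0, 0]
  | 3, 2, 1 => ![0, 1, 0, 1]
  | _, _, _ => 0

theorem cocycleTable_mul : ∀ π σ : Equiv.Perm (Fin 4),
    cocycleTable π + (fun j => cocycleTable σ (π⁻¹ j)) = cocycleTable (π * σ) +
      fun _ => cocycleTable π 0 + cocycleTable σ (π⁻¹ 0) + cocycleTable (π * σ) 0 := by
  decide +kernel

theorem cocycleTable_swap : ∀ i : Fin 3, ∃ d : ZMod 2,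
    cocycleTable (Equiv.swap i.castSucc i.succ) =
      Pi.single ⟨(i + 2) % 4, by omega⟩ 1 + fun _ => d := by
  decide

theorem isCocycleMod_cocycleTable : IsCocycleMod ⊤ cocycleTable :=
  fun π σ => ⟨_, trivial, cocycleTable_mul π σ⟩

def cocycleWeight (π : Equiv.Perm (Fin 4)) : ZMod 2 := ∑ j, cocycleTable π j

theorem cocycleWeight_mul (π σ : Equiv.Perm (Fin 4)) :
    cocycleWeight (π * σ) = cocycleWeight π + cocycleWeight σ := by
  have h := congrArg (fun v => ∑ j, v j) (cocycleTable_mul π σ)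
  have h4 : ∀ a : ZMod 2, 4 • a = 0 := by decide
  simp only [Pi.add_apply, Finset.sum_add_distrib, Finset.sum_const, Finset.card_univ,
    Fintype.card_fin, h4, add_zero, Equiv.sum_comp π⁻¹ (cocycleTable σ)] at h
  exact h.symm

theorem cocycleWeight_swap : ∀ i : Fin 3, cocycleWeight (Equiv.swap i.castSucc i.succ) = 1 := by
  decide

def halfHom {r : ℕ} (h2 : 2 ∣ r) : ZMod 2 →+ ZMod r :=
  ZMod.lift 2 ⟨zmultiplesHom _ ((r / 2 : ℕ) : ZMod r), by
    simp only [zmultiplesHom_apply, natCast_zsmul, nsmul_eq_mul]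
    rw [← Nat.cast_mul, Nat.mul_div_cancel' h2, ZMod.natCast_self]⟩

variable {r : ℕ} (h2 : 2 ∣ r)

theorem halfHom_one : halfHom h2 1 = ((r / 2 : ℕ) : ZMod r) := by
  rw [halfHom, ← Int.cast_one, ZMod.lift_coe]
  simp

theorem halfHom_mem {Z : AddSubgroup (ZMod r)} (hZ : ((r / 2 : ℕ) : ZMod r) ∈ Z) (a : ZMod 2) :
    halfHom h2 a ∈ Z := by
  rcases ZMod.eq_zero_or_eq_one a with rfl | rfl
  · simp
  · simpa [halfHom_one] using hZ

def twistVec (e : ZMod r) : Equiv.Perm (Fin 4) → Fin 4 → ZMod r :=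
  (fun π j => halfHom h2 (cocycleTable π j)) + fun π _ => (cocycleWeight π).val • e

variable {h2} {e : ZMod r} {Z : AddSubgroup (ZMod r)}

theorem isCocycleMod_twistVec (hhalf : ((r / 2 : ℕ) : ZMod r) ∈ Z) (he : 2 • e ∈ Z) :
    IsCocycleMod Z (twistVec h2 e) :=
  (isCocycleMod_cocycleTable.map _ fun a _ => halfHom_mem h2 hhalf a).add <|
    isCocycleMod_const fun π σ => by
      rw [cocycleWeight_mul]
      exact ZMod.val_nsmul_add_sub_mem he _ _

theorem twistVec_add_self (he : 2 • e ∈ Z) (π : Equiv.Perm (Fin 4)) :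
    ∃ a ∈ Z, twistVec h2 e π + twistVec h2 e π = fun _ => a := by
  refine ⟨(cocycleWeight π).val • 2 • e, Z.nsmul_mem he _, funext fun j => ?_⟩
  simp only [twistVec, Pi.add_apply]
  rw [add_add_add_comm, ← map_add, CharTwo.add_self_eq_zero, map_zero, zero_add, ← two_nsmul,
    smul_comm]

theorem sum_twistVec_mem {p : ℕ}
    (hp : ((r / 2 : ℕ) : ZMod r) + 4 • e ∈ AddSubgroup.zmultiples (p : ZMod r))
    (π : Equiv.Perm (Fin 4)) : ∑ j, twistVec h2 e π j ∈ AddSubgroup.zmultiples (p : ZMod r) := by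
  simp only [twistVec, Pi.add_apply, Finset.sum_add_distrib, ← map_sum, Finset.sum_const,
    Finset.card_univ, Fintype.card_fin]
  rw [← cocycleWeight, smul_comm]
  rcases ZMod.eq_zero_or_eq_one (cocycleWeight π) with hw | hw <;> rw [hw]
  · simp
  · rwa [ZMod.val_one, one_smul, halfHom_one]

theorem mk_twistVec_swap {q : ℕ}
    (hhalf : ((r / 2 : ℕ) : ZMod r) ∈ AddSubgroup.zmultiples ((r / q : ℕ) : ZMod r)) (i : Fin 3) :
    ((inl (ofAdd (twistVec h2 e (Equiv.swap i.castSucc i.succ))) * swEl r 4 i.castSucc i.succ :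
        GG r 4) : GGq r q 4) =
      ((tEl r 4 ⟨(i + 2) % 4, by omega⟩ * swEl r 4 i.castSucc i.succ * inl (ofAdd fun _ => e) :
        GG r 4) : GGq r q 4) := by
  obtain ⟨d, hd⟩ := cocycleTable_swap i
  have hv : twistVec h2 e (Equiv.swap i.castSucc i.succ) =
      (Pi.single ⟨(i + 2) % 4, by omega⟩ ((r / 2 : ℕ) : ZMod r) + fun _ => e) +
        fun _ => halfHom h2 d := by
    funext j
    simp only [twistVec, Pi.add_apply, hd, map_add, cocycleWeight_swap, ZMod.val_one, one_smul]
    rw [Pi.apply_single (fun _ => halfHom h2) (fun _ => map_zero _), halfHom_one]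
    abel
  rw [hv, mk_inl_add_const (halfHom_mem h2 hhalf d), ofAdd_add, map_mul, mul_assoc, mul_assoc,
    GG.mul_inl (swEl r 4 _ _)]
  rfl

end Exceptional

section TwistScalar

variable {r p q : ℕ}

def twistScalar (r p q : ℕ) : ZMod r := if Even (r / p) then 0 else ((r / (2 * q) : ℕ) : ZMod r)

theorem two_nsmul_twistScalar_mem (hcond : Odd (r / p) → Even (r / q)) :
    2 • twistScalar r p q ∈ AddSubgroup.zmultiples ((r / q : ℕ) : ZMod r) := by
  by_cases hev : Even (r / p)
  · simp [twistScalar, hev]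
  · rw [twistScalar, if_neg hev, nsmul_eq_mul, ← Nat.cast_mul,
      Nat.two_mul_div_two_mul (hcond (Nat.not_even_iff_odd.mp hev))]
    exact AddSubgroup.mem_zmultiples _

theorem half_add_four_nsmul_twistScalar_mem (hp : p ∣ r) (hq : q ∣ r) (hdvd : p * q ∣ 4 * r)
    (hcond : Odd (r / p) → Even (r / q) ∧ Odd (4 * r / (p * q))) :
    ((r / 2 : ℕ) : ZMod r) + 4 • twistScalar r p q ∈ AddSubgroup.zmultiples (p : ZMod r) := by
  by_cases hev : Even (r / p)
  · simpa [twistScalar, hev] using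
      natCast_mem_zmultiples_natCast (Nat.dvd_div_two_of_even_div hp hev)
  · have hpo := Nat.not_even_iff_odd.mp hev
    obtain ⟨hrq, hm⟩ := hcond hpo
    rw [twistScalar, if_neg hev, nsmul_eq_mul, ← Nat.cast_mul, ← Nat.cast_add]
    exact natCast_mem_zmultiples_natCast (Nat.dvd_div_two_add_four_mul hp hq hdvd hpo hrq hm)

theorem inl_const_twistScalar {n : ℕ} :
    (inl (ofAdd fun _ => twistScalar r p q) : GG r n) =
      if Even (r / p) then 1 else cEl r n ^ (r / (2 * q)) := by
  by_cases hev : Even (r / p)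
  · rw [twistScalar, if_pos hev, if_pos hev, ← Pi.zero_def, ofAdd_zero, map_one]
  · rw [twistScalar, if_neg hev, if_neg hev, cEl_pow]

end TwistScalar

/-- Under the stated hypotheses there is a unique automorphism `φ`
of `G(r,p,q,4)` fixing `N(r,p,q,4)` pointwise with `φ(s_i) = t_{i+2}·s_i` (if `r/p`
is even) resp. `φ(s_i) = t_{i+2}·s_i·c^{r/(2q)}` (if `r/p` is odd), indices mod 4. -/
theorem exceptional_automorphism_Gpq4
    (r p q : ℕ) (hp : p ∣ r) (hq : q ∣ r) (hdvd : p * q ∣ 4 * r)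
    (hqe : Even q) (hcond : Odd (r / p) → Even (r / q) ∧ Odd (4 * r / (p * q))) :
    ∃! φ : MulAut (Gpq r p q 4),
      (∀ x ∈ Nsub r p q 4, φ x = x) ∧
      ∀ (i : ℕ) (h1 : i + 1 < 4),
        (Even (r / p) →
          φ (toGpq r p q 4 (swEl r 4 ⟨i, by omega⟩ ⟨i + 1, h1⟩)) =
            toGpq r p q 4
              (tEl r 4 ⟨(i + 2) % 4, by omega⟩ * swEl r 4 ⟨i, by omega⟩ ⟨i + 1, h1⟩)) ∧
        (Odd (r / p) →
          φ (toGpq r p q 4 (swEl r 4 ⟨i, by omega⟩ ⟨i + 1, h1⟩)) =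
            toGpq r p q 4
              (tEl r 4 ⟨(i + 2) % 4, by omega⟩ * swEl r 4 ⟨i, by omega⟩ ⟨i + 1, h1⟩ *
                cEl r 4 ^ (r / (2 * q)))) := by
  have h2 : 2 ∣ r := hqe.two_dvd.trans hq
  have hhalf := natCast_mem_zmultiples_natCast (R := ZMod r) (Nat.div_dvd_div_two hq hqe)
  have he2 := two_nsmul_twistScalar_mem (p := p) fun h => (hcond h).1
  have hΔ := half_add_four_nsmul_twistScalar_mem hp hq hdvd hcond
  set Φ := twistAut (twistVec h2 (twistScalar r p q)) (isCocycleMod_twistVec hhalf he2)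
    (twistVec_add_self he2) (sum_twistVec_mem hΔ)
  have hΦs (i : ℕ) (h1 : i + 1 < 4) : Φ (toGpq r p q 4 (swEl r 4 ⟨i, by omega⟩ ⟨i + 1, h1⟩)) =
      toGpq r p q 4 (tEl r 4 ⟨(i + 2) % 4, by omega⟩ * swEl r 4 ⟨i, by omega⟩ ⟨i + 1, h1⟩ *
        inl (ofAdd fun _ => twistScalar r p q)) :=
    twistAut_toGpq _ _ _ _ hq hdvd (inr_mem_Grpn _) (mk_twistVec_swap hhalf ⟨i, by omega⟩)
  refine existsUnique_of_exists_of_unique ⟨Φ, fun x hx => twistAut_apply_of_mem_Nsub _ _ _ _ hx,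
    fun i h1 => ⟨fun hev => ?_, fun hpo => ?_⟩⟩ ?_
  · rw [hΦs i h1, inl_const_twistScalar, if_pos hev, mul_one]
  · rw [hΦs i h1, inl_const_twistScalar, if_neg (Nat.not_even_iff_odd.mpr hpo)]
  rintro ψ₁ ψ₂ ⟨hN₁, hs₁⟩ ⟨hN₂, hs₂⟩
  refine MulEquiv.toMonoidHom_injective <|
    Gpq_hom_ext (fun x hx => (hN₁ x hx).trans (hN₂ x hx).symm) fun i => ?_
  rcases Nat.even_or_odd (r / p) with hev | hpo
  · exact ((hs₁ i (by omega)).1 hev).trans ((hs₂ i (by omega)).1 hev).symm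
  · exact ((hs₁ i (by omega)).2 hpo).trans ((hs₂ i (by omega)).2 hpo).symm
end
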